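/- arXiv:1705.02989 — 2 statements merged into one kernel-verified Lean document; each statement's English description precedes it below -/
import Mathlib

section
/- The class of partial (k,t,λ)-designs has the free amalgamation property with respect to closed embeddings: if (A,R_A) is a common closed induced subdesign of partial (k,t,λ)-designs (B₁,R₁) and (B₂,R₂) (with B₁ ∩ B₂ = A and R₁, R₂ restricting to R_A on A), then (B₁ ∪ B₂, R₁ ∪ R₂) is a partial (k,t,λ)-design. -/
open Finset

/-- Free amalgamation of partial (k,t,λ)-designs over a common closed subdesign:
if `A = B₁ ∩ B₂` is closed in both `B₁` and `B₂`, then `(B₁ ∪ B₂, R₁ ∪ R₂)` is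
again a partial (k,t,λ)-design. -/
theorem partial_design_free_amalgamation {α : Type*} [DecidableEq α]
    (k t lam : ℕ) (ht : 1 ≤ t) (hkt : t ≤ k) (hlam : 1 ≤ lam)
    (A B₁ B₂ : Finset α) (RA R₁ R₂ : Finset (Finset α))
    (hA1 : A ⊆ B₁) (hA2 : A ⊆ B₂) (hcap : B₁ ∩ B₂ = A)
    -- B₁ and B₂ are partial (k,t,λ)-designs
    (hblocks₁ : ∀ M ∈ R₁, M ⊆ B₁ ∧ M.card = k)
    (hblocks₂ : ∀ M ∈ R₂, M ⊆ B₂ ∧ M.card = k)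
    (hpartial₁ : ∀ T : Finset α, T ⊆ B₁ → T.card = t →
      (R₁.filter (fun M => T ⊆ M)).card ≤ lam)
    (hpartial₂ : ∀ T : Finset α, T ⊆ B₂ → T.card = t →
      (R₂.filter (fun M => T ⊆ M)).card ≤ lam)
    -- R₁ and R₂ both restrict to R_A on A
    (hrestr₁ : RA = R₁.filter (fun M => M ⊆ A))
    (hrestr₂ : RA = R₂.filter (fun M => M ⊆ A))
    -- the inclusions A ⊆ B₁, A ⊆ B₂ are closed embeddings
    (hclosed₁ : ∀ M ∈ R₁, M ∉ RA → (M ∩ A).card ≤ t - 1)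
    (hclosed₂ : ∀ M ∈ R₂, M ∉ RA → (M ∩ A).card ≤ t - 1) :
    (∀ M ∈ R₁ ∪ R₂, M ⊆ B₁ ∪ B₂ ∧ M.card = k) ∧
      (∀ T : Finset α, T ⊆ B₁ ∪ B₂ → T.card = t →
        ((R₁ ∪ R₂).filter (fun M => T ⊆ M)).card ≤ lam) := by
  constructor
  · intro M hM
    rcases Finset.mem_union.1 hM with h | h
    · exact ⟨(hblocks₁ M h).1.trans Finset.subset_union_left, (hblocks₁ M h).2⟩
    · exact ⟨(hblocks₂ M h).1.trans Finset.subset_union_right, (hblocks₂ M h).2⟩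
  · intro T hT hTt
    by_cases h1 : T ⊆ B₁
    · by_cases h2 : T ⊆ B₂
      · -- T ⊆ A
        have hTA : T ⊆ A := by
          rw [← hcap]; exact Finset.subset_inter h1 h2
        have hsub : (R₁ ∪ R₂).filter (fun M => T ⊆ M) ⊆ R₁.filter (fun M => T ⊆ M) := by
          intro M hM
          rw [Finset.mem_filter] at hM ⊢
          refine ⟨?_, hM.2⟩
          rcases Finset.mem_union.1 hM.1 with h | h
          · exact h
          · -- M ∈ R₂ containing T ⊆ A, so M ∈ RA ⊆ R₁
            have hMRA : M ∈ RA := by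
              by_contra hc
              have := hclosed₂ M h hc
              have hTsub : T ⊆ M ∩ A := Finset.subset_inter hM.2 hTA
              have := Finset.card_le_card hTsub
              omega
            rw [hrestr₁] at hMRA
            exact (Finset.mem_filter.1 hMRA).1
        calc ((R₁ ∪ R₂).filter (fun M => T ⊆ M)).card
            ≤ (R₁.filter (fun M => T ⊆ M)).card := Finset.card_le_card hsub
          _ ≤ lam := hpartial₁ T h1 hTt
      · have hsub : (R₁ ∪ R₂).filter (fun M => T ⊆ M) ⊆ R₁.filter (fun M => T ⊆ M) := by
          intro M hM
          rw [Finset.mem_filter] at hM ⊢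
          refine ⟨?_, hM.2⟩
          rcases Finset.mem_union.1 hM.1 with h | h
          · exact h
          · exact absurd (hM.2.trans (hblocks₂ M h).1) h2
        exact (Finset.card_le_card hsub).trans (hpartial₁ T h1 hTt)
    · by_cases h2 : T ⊆ B₂
      · have hsub : (R₁ ∪ R₂).filter (fun M => T ⊆ M) ⊆ R₂.filter (fun M => T ⊆ M) := by
          intro M hM
          rw [Finset.mem_filter] at hM ⊢
          refine ⟨?_, hM.2⟩
          rcases Finset.mem_union.1 hM.1 with h | h
          · exact absurd (hM.2.trans (hblocks₁ M h).1) h1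
          · exact h
        exact (Finset.card_le_card hsub).trans (hpartial₂ T h2 hTt)
      · have : (R₁ ∪ R₂).filter (fun M => T ⊆ M) = ∅ := by
          rw [Finset.filter_eq_empty_iff]
          intro M hM hTM
          rcases Finset.mem_union.1 hM with h | h
          · exact h1 (hTM.trans (hblocks₁ M h).1)
          · exact h2 (hTM.trans (hblocks₂ M h).1)
        rw [this]; simpa using hlam
end

section
/- If a class K of finite ordered structures is Ramsey (for every A, B in K and every r ≥ 1 there is C in K with C → (B)^A_r) and K has the joint embedding property, then K has the amalgamation property. -/
open FirstOrder

/-- A bundled finite structure in a first-order language `L`. -/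
structure FinStr (L : Language) where
  carrier : Type
  [str : L.Structure carrier]
  [fin : Finite carrier]

attribute [instance] FinStr.str FinStr.fin

/-- For a class of rigid finite (ordered) structures, the Ramsey property together
with the joint embedding property implies the amalgamation property
(Nešetřil's classical observation). -/
theorem ramsey_implies_amalgamation {L : Language} (K : Set (FinStr L))
    -- every structure in `K` is rigid: the only automorphism is the identity
    (hrigid : ∀ A ∈ K, ∀ e : A.carrier ≃[L] A.carrier,
      e = FirstOrder.Language.Equiv.refl L A.carrier)
    -- the Ramsey property
    (hramsey : ∀ A ∈ K, ∀ B ∈ K, ∀ r : ℕ, 1 ≤ r →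
      ∃ C ∈ K, ∀ χ : (A.carrier ↪[L] C.carrier) → Fin r,
        ∃ g : B.carrier ↪[L] C.carrier,
          ∀ f₁ f₂ : A.carrier ↪[L] B.carrier,
            χ (g.comp f₁) = χ (g.comp f₂))
    -- the joint embedding property
    (hjep : ∀ A ∈ K, ∀ B ∈ K, ∃ C ∈ K,
      Nonempty (A.carrier ↪[L] C.carrier) ∧ Nonempty (B.carrier ↪[L] C.carrier)) :
    -- the amalgamation property
    ∀ A ∈ K, ∀ B₁ ∈ K, ∀ B₂ ∈ K,
      ∀ α₁ : A.carrier ↪[L] B₁.carrier, ∀ α₂ : A.carrier ↪[L] B₂.carrier,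
        ∃ C ∈ K, ∃ β₁ : B₁.carrier ↪[L] C.carrier,
          ∃ β₂ : B₂.carrier ↪[L] C.carrier,
            β₁.comp α₁ = β₂.comp α₂ := by
  intro A hA B₁ hB₁ B₂ hB₂ α₁ α₂
  classical
  obtain ⟨D, hD, ⟨g₁⟩, ⟨g₂⟩⟩ := hjep B₁ hB₁ B₂ hB₂
  obtain ⟨C, hC, hCram⟩ := hramsey A hA D hD 2 (by norm_num)
  set χ : (A.carrier ↪[L] C.carrier) → Fin 2 := fun f =>
    if ∃ β : B₁.carrier ↪[L] C.carrier, β.comp α₁ = f then 0 else 1 with hχ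
  obtain ⟨g, hg⟩ := hCram χ
  have h := hg (g₁.comp α₁) (g₂.comp α₂)
  have h1 : χ (g.comp (g₁.comp α₁)) = 0 := by
    rw [hχ]
    simp only []
    rw [if_pos ⟨g.comp g₁, by ext x; simp [Language.Embedding.comp_apply]⟩]
  rw [h1] at h
  have h2 : ∃ β : B₁.carrier ↪[L] C.carrier, β.comp α₁ = g.comp (g₂.comp α₂) := by
    by_contra hcon
    rw [hχ] at h
    simp only [if_neg hcon] at h
    exact absurd h.symm (by decide)
  obtain ⟨β₁, hβ₁⟩ := h2
  refine ⟨C, hC, β₁, g.comp g₂, ?_⟩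
  rw [hβ₁]; ext x; simp [Language.Embedding.comp_apply]
end
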